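/- For m ≥ 2, the convex cone in ℚ^m generated over ℚ_{≥0} by the vectors u_{ij}, 1 ≤ i < j ≤ m, equals the set {(s_1,…,s_m) ∈ ℚ^m : s_i ≥ 0 for all i, and 2·s_i ≤ s_1 + ⋯ + s_m for all i}. -/

import Mathlib

/-- The convex cone in `ℚ^m` generated over `ℚ_{≥0}` by a set `S`:
all finite nonnegative rational combinations of elements of `S`. -/
def coneGen {m : ℕ} (S : Set (Fin m → ℚ)) : Set (Fin m → ℚ) :=
  {v | ∃ (s : Finset (Fin m → ℚ)) (c : (Fin m → ℚ) → ℚ),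
    (∀ w ∈ s, 0 ≤ c w ∧ w ∈ S) ∧ v = ∑ w ∈ s, c w • w}

/-- The vector `u_{ij} ∈ ℚ^m` with entries `1` at positions `i` and `j` and `0`
elsewhere. -/
def uvec {m : ℕ} (i j : Fin m) : Fin m → ℚ := fun l => if l = i ∨ l = j then 1 else 0

/-! A vector of the right-hand cone whose coordinate `k` is tight, `2 s_k = ∑ s`, equals
`∑_{l ≠ k} s_l u_{kl}`. Otherwise take `k` with `s_k` maximal: there are two more positive
coordinates `i ≠ j`, and subtracting `t u_{ij}` with `t = min (s_i, s_j, (∑ s - 2 s_k) / 2)` stays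
in the cone and either kills a coordinate or makes coordinate `k` tight, so induction on the
support concludes. The other inclusion holds because both sides are pointed cones. -/

open Finset

theorem coneGen_eq_hull {m : ℕ} (S : Set (Fin m → ℚ)) :
    coneGen S = PointedCone.hull ℚ S := by
  ext v
  rw [SetLike.mem_coe, Submodule.mem_span_iff_exists_finset_subset]
  constructor
  · rintro ⟨t, c, hc, rfl⟩
    refine ⟨fun w => if h : w ∈ t then ⟨c w, (hc w h).1⟩ else 0, t, fun w hw => (hc w hw).2,
      fun w hw => not_not.mp fun h => hw (dif_neg h), sum_congr rfl fun w hw => ?_⟩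
    dsimp only
    rw [dif_pos hw]
    rfl
  · rintro ⟨f, t, hts, -, rfl⟩
    exact ⟨t, fun w => f w, fun w hw => ⟨(f w).2, hts hw⟩, rfl⟩

theorem card_filter_ne_zero_lt_of_le {ι : Type*} [Fintype ι] {s s' : ι → ℚ}
    (h₀ : ∀ k, 0 ≤ s' k) (hle : ∀ k, s' k ≤ s k) {i : ι} (hi : s' i = 0) (hi' : s i ≠ 0) :
    #{k | s' k ≠ 0} < #{k | s k ≠ 0} := by
  refine card_lt_card ((ssubset_iff_of_subset fun k hk => ?_).2 ⟨i, by simpa using hi', by simpa⟩)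
  simp only [mem_filter, mem_univ, true_and] at hk ⊢
  exact fun hk' => hk (le_antisymm (hk' ▸ hle k) (h₀ k))

theorem exists_pair_pos_of_two_mul_max_lt_sum {ι : Type*} [Fintype ι] [DecidableEq ι] {s : ι → ℚ}
    (hs : ∀ l, 0 ≤ s l) {k : ι} (hk : ∀ l, s l ≤ s k) (hlt : 2 * s k < ∑ l, s l) :
    ∃ i j, i ≠ j ∧ i ≠ k ∧ j ≠ k ∧ 0 < s i ∧ 0 < s j := by
  have hk' := sum_erase_add univ s (mem_univ k)
  obtain ⟨i, hi, hsi⟩ := (sum_pos_iff_of_nonneg fun l _ => hs l).1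
    (show 0 < ∑ l ∈ univ.erase k, s l by linarith [hs k])
  have hi' := sum_erase_add _ s hi
  obtain ⟨j, hj, hsj⟩ := (sum_pos_iff_of_nonneg fun l _ => hs l).1
    (show 0 < ∑ l ∈ (univ.erase k).erase i, s l by linarith [hk i])
  obtain ⟨hji, hj⟩ := mem_erase.1 hj
  exact ⟨i, j, hji.symm, (mem_erase.1 hi).1, (mem_erase.1 hj).1, hsi, hsj⟩

section

variable {m : ℕ}

theorem uvec_comm (i j : Fin m) : uvec i j = uvec j i := by
  funext l; simp [uvec, or_comm]

@[simp] theorem uvec_apply_left (i j : Fin m) : uvec i j i = 1 := by simp [uvec]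

@[simp] theorem uvec_apply_right (i j : Fin m) : uvec i j j = 1 := by simp [uvec]

theorem uvec_apply_of_ne {i j k : Fin m} (hi : k ≠ i) (hj : k ≠ j) : uvec i j k = 0 := by
  simp [uvec, hi, hj]

theorem uvec_nonneg (i j k : Fin m) : 0 ≤ uvec i j k := by
  unfold uvec; split_ifs <;> norm_num

theorem sum_uvec {i j : Fin m} (h : i ≠ j) : ∑ l, uvec i j l = 2 := by
  rw [sum_eq_add_of_mem i j (mem_univ _) (mem_univ _) h fun l _ hl => uvec_apply_of_ne hl.1 hl.2]
  norm_num

def balancedCone (m : ℕ) : PointedCone ℚ (Fin m → ℚ) where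
  carrier := {s | (∀ i, 0 ≤ s i) ∧ ∀ i, 2 * s i ≤ ∑ l, s l}
  zero_mem' := by simp
  add_mem' {a b} ha hb := ⟨fun i => add_nonneg (ha.1 i) (hb.1 i), fun i => by
    simp only [Pi.add_apply, sum_add_distrib]
    linarith [ha.2 i, hb.2 i]⟩
  smul_mem' c s hs := by
    refine ⟨fun i => mul_nonneg c.2 (hs.1 i), fun i => ?_⟩
    change 2 * ((c : ℚ) * s i) ≤ ∑ l, (c : ℚ) * s l
    rw [← mul_sum, mul_left_comm]
    exact mul_le_mul_of_nonneg_left (hs.2 i) c.2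

theorem mem_balancedCone {s : Fin m → ℚ} :
    s ∈ balancedCone m ↔ (∀ i, 0 ≤ s i) ∧ ∀ i, 2 * s i ≤ ∑ l, s l :=
  Iff.rfl

theorem uvec_mem_balancedCone {i j : Fin m} (h : i ≠ j) : uvec i j ∈ balancedCone m := by
  rw [mem_balancedCone, sum_uvec h]
  constructor <;> intro k <;> unfold uvec <;> split_ifs <;> norm_num

def pairVectors (m : ℕ) : Set (Fin m → ℚ) := {v | ∃ i j : Fin m, i < j ∧ v = uvec i j}

theorem hull_pairVectors_le_balancedCone : PointedCone.hull ℚ (pairVectors m) ≤ balancedCone m :=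
  Submodule.span_le.2 fun _ ⟨_, _, hij, hv⟩ => hv ▸ uvec_mem_balancedCone hij.ne

theorem uvec_mem_hull_pairVectors {i j : Fin m} (h : i ≠ j) :
    uvec i j ∈ PointedCone.hull ℚ (pairVectors m) := by
  apply PointedCone.subset_hull
  rcases h.lt_or_gt with h | h
  · exact ⟨i, j, h, rfl⟩
  · exact ⟨j, i, h, uvec_comm i j⟩

theorem mem_hull_pairVectors_of_two_mul_eq_sum {s : Fin m → ℚ} (hs : ∀ l, 0 ≤ s l) {k : Fin m}
    (hk : 2 * s k = ∑ l, s l) : s ∈ PointedCone.hull ℚ (pairVectors m) := by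
  have hs_eq : s = ∑ l ∈ univ.erase k, s l • uvec k l := by
    funext k'
    simp only [Finset.sum_apply, Pi.smul_apply, smul_eq_mul]
    rcases eq_or_ne k' k with rfl | hk'
    · simp only [uvec_apply_left, mul_one]
      linarith [sum_erase_add univ s (mem_univ k')]
    · simp [uvec, hk']
  rw [hs_eq]
  exact Submodule.sum_mem _ fun l hl =>
    PointedCone.smul_mem _ (hs l) (uvec_mem_hull_pairVectors (ne_of_mem_erase hl).symm)

theorem sum_sub_smul_uvec (s : Fin m → ℚ) (t : ℚ) {i j : Fin m} (h : i ≠ j) :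
    ∑ l, (s - t • uvec i j) l = ∑ l, s l - 2 * t := by
  simp only [Pi.sub_apply, Pi.smul_apply, smul_eq_mul, sum_sub_distrib, ← mul_sum, sum_uvec h]
  ring

theorem sub_smul_uvec_mem_balancedCone {s : Fin m → ℚ} (hs : s ∈ balancedCone m) {i j : Fin m}
    (hij : i ≠ j) {t : ℚ} (hti : t ≤ s i) (htj : t ≤ s j) (hsum : ∀ k, 2 * s k + 2 * t ≤ ∑ l, s l) :
    s - t • uvec i j ∈ balancedCone m := by
  rw [mem_balancedCone, sum_sub_smul_uvec s t hij]
  refine ⟨fun k => ?_, fun k => ?_⟩ <;>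
    simp only [Pi.sub_apply, Pi.smul_apply, smul_eq_mul, uvec] <;> split_ifs with hk
  · rcases hk with rfl | rfl <;> linarith
  · linarith [hs.1 k]
  · linarith [hs.2 k]
  · linarith [hsum k]

theorem mem_hull_pairVectors_of_mem_balancedCone {s : Fin m → ℚ} (hs : s ∈ balancedCone m) :
    s ∈ PointedCone.hull ℚ (pairVectors m) := by
  induction hn : #{k | s k ≠ 0} using Nat.strong_induction_on generalizing s with
  | _ n ih =>
  obtain rfl | ⟨a, -⟩ := eq_or_ne s 0 |>.imp_right Function.ne_iff.1
  · exact zero_mem _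
  obtain ⟨k, -, hk⟩ := exists_max_image univ s ⟨a, mem_univ a⟩
  rcases (hs.2 k).eq_or_lt with htight | hslack
  · exact mem_hull_pairVectors_of_two_mul_eq_sum hs.1 htight
  obtain ⟨i, j, hij, hik, hjk, hi, hj⟩ :=
    exists_pair_pos_of_two_mul_max_lt_sum hs.1 (fun l => hk l (mem_univ l)) hslack
  set d := (∑ l, s l - 2 * s k) / 2 with hd
  set t := min (s i) (min (s j) d)
  have hti : t ≤ s i := min_le_left _ _
  have htj : t ≤ s j := (min_le_right _ _).trans (min_le_left _ _)
  have htd : t ≤ d := (min_le_right _ _).trans (min_le_right _ _)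
  have ht : 0 ≤ t := le_min hi.le (le_min hj.le (by linarith))
  have hs' : s - t • uvec i j ∈ balancedCone m :=
    sub_smul_uvec_mem_balancedCone hs hij hti htj fun l => by linarith [hk l (mem_univ l)]
  have hle : ∀ l, (s - t • uvec i j) l ≤ s l := fun l =>
    sub_le_self _ (mul_nonneg ht (uvec_nonneg i j l))
  rw [← sub_add_cancel s (t • uvec i j)]
  refine add_mem ?_ (PointedCone.smul_mem _ ht (uvec_mem_hull_pairVectors hij))
  obtain ht_eq | ht_eq | ht_eq : t = s i ∨ t = s j ∨ t = d := by grind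
  · refine ih _ (hn ▸ card_filter_ne_zero_lt_of_le hs'.1 hle (i := i) ?_ hi.ne') hs' rfl
    simp [ht_eq]
  · refine ih _ (hn ▸ card_filter_ne_zero_lt_of_le hs'.1 hle (i := j) ?_ hj.ne') hs' rfl
    simp [ht_eq]
  · refine mem_hull_pairVectors_of_two_mul_eq_sum hs'.1 (k := k) ?_
    rw [sum_sub_smul_uvec s t hij]
    simp only [ht_eq, Pi.sub_apply, Pi.smul_apply, uvec_apply_of_ne hik.symm hjk.symm, smul_eq_mul,
      mul_zero, sub_zero, d]
    ring

end

theorem coneGen_uvec_eq_general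
    {m : ℕ} :
    coneGen {v | ∃ i j : Fin m, i < j ∧ v = uvec i j} =
      {s | (∀ i, 0 ≤ s i) ∧ ∀ i, 2 * s i ≤ ∑ l, s l} := by
  change coneGen (pairVectors m) = (balancedCone m : Set (Fin m → ℚ))
  rw [coneGen_eq_hull]
  exact congrArg _ (le_antisymm hull_pairVectors_le_balancedCone
    fun _ => mem_hull_pairVectors_of_mem_balancedCone)

/-- For `m ≥ 2`, the convex cone in `ℚ^m` generated over `ℚ_{≥0}` by the vectors
`u_{ij}`, `1 ≤ i < j ≤ m`, equals
`{s ∈ ℚ^m : s_i ≥ 0 for all i, and 2 s_i ≤ s_1 + ⋯ + s_m for all i}`. -/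
theorem coneGen_uvec_eq
    {m : ℕ} (hm : 2 ≤ m) :
    coneGen {v | ∃ i j : Fin m, i < j ∧ v = uvec i j} =
      {s | (∀ i, 0 ≤ s i) ∧ ∀ i, 2 * s i ≤ ∑ l, s l} :=
  coneGen_uvec_eq_general
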